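/- Let E and F be finite-dimensional real vector spaces, T : E → F a linear map with adjoint T* : F* → E*. Let ψ : E → ℝ ∪ {−∞} be a positively homogeneous, concave, upper semicontinuous function with associated closed convex set Ω = {φ ∈ E* : φ ≥ ψ}, and assume ψ < 0 on ker T ∖ {0}. Then the set Ω' = (T*)⁻¹(Ω) ⊆ F* is non-empty, and the positively homogeneous concave upper semicontinuous function ψ' : F → ℝ ∪ {−∞} dual to Ω' is given by ψ'(y) = sup{ψ(x) : x ∈ E, Tx = y} for every y ∈ F (with sup ∅ = −∞). -/

import Mathlib

/-!
The image `C` of the hypograph `{(x, r) | r ≤ ψ x}` under `T × id` is a convex cone in `F × ℝ`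
whose upper boundary is `y ↦ sup {ψ x | T x = y}`, and `(T*)⁻¹(Ω)` is exactly the set of `φ`
with `t ≤ φ w` on `C`. Because `ψ < 0` on `ker T ∖ {0}`, the hypograph meets `ker (T × id)`
only at `0`, which in finite dimension makes `C` closed. Separating the segment from a point
`(y, c) ∉ C` to `(0, 1)` from `C` gives a functional with negative vertical part, i.e. some
`φ ∈ (T*)⁻¹(Ω)` with `φ y < c`. For `(y, c) = (0, 1)` this is non-emptiness; for every
`c > sup {ψ x | T x = y}` it gives `ψ' y ≤ c`, and the reverse inequality is immediate.
-/

open scoped Topology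

noncomputable section

namespace DirectionalCounting

variable {E F : Type*} [NormedAddCommGroup E] [NormedSpace ℝ E]
  [NormedAddCommGroup F] [NormedSpace ℝ F]

/-- `ψ` is positively homogeneous: `ψ (t • x) = t * ψ x` for `t ≥ 0`
(with the convention `ψ 0 = 0`, which is the case `t = 0`). -/
def PosHomog (ψ : E → EReal) : Prop :=
  ∀ t : ℝ, 0 ≤ t → ∀ x : E, ψ (t • x) = (t : EReal) * ψ x

/-- Concavity for an `EReal`-valued function. -/
def ConcaveE (ψ : E → EReal) : Prop :=
  ∀ x y : E, ∀ t : ℝ, 0 ≤ t → t ≤ 1 →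
    (t : EReal) * ψ x + ((1 - t : ℝ) : EReal) * ψ y ≤ ψ (t • x + (1 - t) • y)

/-- The closed convex set `Ω ⊆ E*` associated with `ψ`. -/
def OmegaSet (ψ : E → EReal) : Set (E →L[ℝ] ℝ) :=
  {φ | ∀ x : E, ψ x ≤ ((φ x : ℝ) : EReal)}

/-- The homogeneous concave upper semicontinuous function dual to a subset
`Ω ⊆ F*`: `ψ'(y) = inf {φ(y) : φ ∈ Ω}`. -/
def psiDual (Ω : Set (F →L[ℝ] ℝ)) (y : F) : EReal :=
  sInf ((fun φ : F →L[ℝ] ℝ => ((φ y : ℝ) : EReal)) '' Ω)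

section ClosedImage

variable {P Q : Type*} [NormedAddCommGroup P] [NormedSpace ℝ P] [FiniteDimensional ℝ P]
  [NormedAddCommGroup Q] [NormedSpace ℝ Q] {L : P →L[ℝ] Q} {C : Set P}

theorem exists_pos_mul_norm_le_norm_apply_of_cone (hC : IsClosed C)
    (hcone : ∀ t : ℝ, 0 ≤ t → ∀ p ∈ C, t • p ∈ C) (hker : ∀ p ∈ C, L p = 0 → p = 0) :
    ∃ c > 0, ∀ p ∈ C, c * ‖p‖ ≤ ‖L p‖ := by
  have hK : IsCompact (C ∩ Metric.sphere 0 1) := (isCompact_sphere 0 1).inter_left hC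
  have hpos : ∀ p ∈ C ∩ Metric.sphere 0 1, 0 < ‖L p‖ := by
    rintro p ⟨hp, hp1⟩
    refine norm_pos_iff.2 fun hLp => ?_
    simp [hker p hp hLp] at hp1
  obtain ⟨c, hc, hcK⟩ := hK.exists_forall_le' L.continuous.norm.continuousOn hpos
  refine ⟨c, hc, fun p hp => ?_⟩
  rcases eq_or_ne p 0 with rfl | hp0
  · simp
  have hnorm : 0 < ‖p‖ := norm_pos_iff.2 hp0
  have h := hcK (‖p‖⁻¹ • p) ⟨hcone _ (by positivity) p hp, by simp [norm_smul, hnorm.ne']⟩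
  rw [map_smul, norm_smul, norm_inv, norm_norm, le_inv_mul_iff₀ hnorm] at h
  linarith

theorem isClosed_image_of_cone (hC : IsClosed C)
    (hcone : ∀ t : ℝ, 0 ≤ t → ∀ p ∈ C, t • p ∈ C) (hker : ∀ p ∈ C, L p = 0 → p = 0) :
    IsClosed (L '' C) := by
  obtain ⟨c, hc, hcL⟩ := exists_pos_mul_norm_le_norm_apply_of_cone hC hcone hker
  -- points of `C` mapped close to `y` lie in a fixed ball, whose part of `C` has compact image
  refine isClosed_of_closure_subset fun y hy => ?_
  set R := (‖y‖ + 1) / c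
  have hK : IsCompact (L '' (C ∩ Metric.closedBall 0 R)) :=
    ((isCompact_closedBall 0 R).inter_left hC).image L.continuous
  have hyK : y ∈ closure (L '' (C ∩ Metric.closedBall 0 R)) := by
    rw [Metric.mem_closure_iff] at hy ⊢
    intro ε hε
    obtain ⟨_, ⟨p, hp, rfl⟩, hyp⟩ := hy (min ε 1) (lt_min hε one_pos)
    refine ⟨L p, ⟨p, ⟨hp, ?_⟩, rfl⟩, hyp.trans_le (min_le_left _ _)⟩
    rw [mem_closedBall_zero_iff, le_div_iff₀ hc, mul_comm]
    calc c * ‖p‖ ≤ ‖L p‖ := hcL p hp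
      _ ≤ ‖y‖ + ‖L p - y‖ := norm_le_insert' _ _
      _ ≤ ‖y‖ + 1 := by
        rw [← dist_eq_norm, dist_comm]
        linarith [min_le_right ε 1]
  exact Set.image_mono Set.inter_subset_left (hK.isClosed.closure_subset hyK)

end ClosedImage

section ConeSeparation

variable {V : Type*} [AddCommGroup V] [Module ℝ V]

theorem disjoint_segment_of_notMem {C : PointedCone ℝ (V × ℝ)}
    (hdown : ((0 : V), (-1 : ℝ)) ∈ C) (htop : ((0 : V), (1 : ℝ)) ∉ C) {y : V} {c : ℝ}
    (hyc : (y, c) ∉ C) : Disjoint (segment ℝ (y, c) (0, 1)) (C : Set (V × ℝ)) := by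
  rw [Set.disjoint_left]
  rintro _ ⟨a, b, ha, hb, hab, rfl⟩ hmem
  -- `C` absorbs the downward ray, so dropping by `b` leaves `a • (y, c)` in `C`
  have hdrop : a • (y, c) ∈ C := by
    simpa using C.add_mem hmem (C.smul_mem hb hdown)
  rcases ha.eq_or_lt with rfl | ha
  · obtain rfl : b = 1 := by simpa using hab
    exact htop (by simpa using hmem)
  · have h := C.smul_mem (inv_nonneg.2 ha.le) hdrop
    rw [smul_smul, inv_mul_cancel₀ ha.ne', one_smul] at h
    exact hyc h

variable [TopologicalSpace V] [IsTopologicalAddGroup V] [ContinuousSMul ℝ V]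
  [LocallyConvexSpace ℝ V]

theorem exists_le_apply_and_lt_of_notMem {C : PointedCone ℝ (V × ℝ)}
    (hC : IsClosed (C : Set (V × ℝ))) (hdown : ((0 : V), (-1 : ℝ)) ∈ C)
    (htop : ((0 : V), (1 : ℝ)) ∉ C) {y : V} {c : ℝ} (hyc : (y, c) ∉ C) :
    ∃ φ : V →L[ℝ] ℝ, (∀ p ∈ C, p.2 ≤ φ p.1) ∧ φ y < c := by
  have hK : IsCompact (segment ℝ (y, c) ((0 : V), (1 : ℝ))) := by
    rw [← convexHull_pair]
    exact (Set.toFinite _).isCompact_convexHull ℝ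
  obtain ⟨f, hfC, hfK⟩ := ProperCone.hyperplane_separation (⟨C, hC⟩ : ProperCone ℝ (V × ℝ))
    (convex_segment _ _) hK (disjoint_segment_of_notMem hdown htop hyc)
  -- `f (w, t) = f (w, 0) + t * f (0, 1)` with `f (0, 1) < 0`, so `0 ≤ f` on `C` reads `t ≤ φ w`
  have hβ : f (0, 1) < 0 := hfK _ (right_mem_segment ℝ _ _)
  have hf : ∀ w t, f (w, t) = f (w, 0) + t * f (0, 1) := by
    intro w t
    rw [← smul_eq_mul, ← map_smul, ← map_add]
    simp
  refine ⟨-(f (0, 1))⁻¹ • f.comp (ContinuousLinearMap.inl ℝ V ℝ), fun p hp => ?_, ?_⟩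
  · have h := hfC p hp
    rw [← Prod.mk.eta (p := p), hf] at h
    simp only [smul_apply, ContinuousLinearMap.comp_apply,
      ContinuousLinearMap.inl_apply, smul_eq_mul]
    rw [neg_mul, ← div_eq_inv_mul, ← div_neg, le_div_iff₀ (neg_pos.2 hβ)]
    linarith
  · have h := hfK _ (left_mem_segment ℝ _ _)
    rw [hf] at h
    simp only [smul_apply, ContinuousLinearMap.comp_apply,
      ContinuousLinearMap.inl_apply, smul_eq_mul]
    rw [neg_mul, ← div_eq_inv_mul, ← div_neg, div_lt_iff₀ (neg_pos.2 hβ)]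
    linarith

end ConeSeparation

section Hypograph

variable {X : Type*}

def hypograph (ψ : X → EReal) : Set (X × ℝ) := {p | (p.2 : EReal) ≤ ψ p.1}

theorem isClosed_hypograph [TopologicalSpace X] {ψ : X → EReal} (husc : UpperSemicontinuous ψ) :
    IsClosed (hypograph ψ) :=
  husc.IsClosed_hypograph.preimage
    (continuous_fst.prodMk (continuous_coe_real_ereal.comp continuous_snd))

end Hypograph

section HypographCone

variable {ψ : E → EReal}

theorem PosHomog.map_zero (hhom : PosHomog ψ) : ψ 0 = 0 := by
  simpa using hhom 0 le_rfl 0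

theorem PosHomog.smul_mem_hypograph (hhom : PosHomog ψ) {t : ℝ} (ht : 0 ≤ t)
    {p : E × ℝ} (hp : p ∈ hypograph ψ) : t • p ∈ hypograph ψ := by
  simp only [hypograph, Set.mem_ofPred_eq, Prod.smul_fst, Prod.smul_snd, smul_eq_mul,
    hhom t ht, EReal.coe_mul] at hp ⊢
  exact mul_le_mul_of_nonneg_left hp (by exact_mod_cast ht)

theorem ConcaveE.convex_hypograph (hconc : ConcaveE ψ) : Convex ℝ (hypograph ψ) := by
  intro p hp q hq a b ha hb hab
  obtain rfl : b = 1 - a := by linarith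
  simp only [hypograph, Set.mem_ofPred_eq, Prod.fst_add, Prod.snd_add, Prod.smul_fst,
    Prod.smul_snd, smul_eq_mul, EReal.coe_add, EReal.coe_mul] at hp hq ⊢
  refine le_trans (add_le_add ?_ ?_) (hconc p.1 q.1 a ha (by linarith))
  · exact mul_le_mul_of_nonneg_left hp (by exact_mod_cast ha)
  · exact mul_le_mul_of_nonneg_left hq (by exact_mod_cast hb)

def hypographCone (hhom : PosHomog ψ) (hconc : ConcaveE ψ) : PointedCone ℝ (E × ℝ) where
  carrier := hypograph ψ
  zero_mem' := by simp [hypograph, hhom.map_zero]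
  smul_mem' c _ hp := hhom.smul_mem_hypograph c.2 hp
  add_mem' {p q} hp hq := by
    have hmid := hconc.convex_hypograph hp hq (by norm_num : (0 : ℝ) ≤ 1 / 2)
      (by norm_num : (0 : ℝ) ≤ 1 / 2) (by norm_num)
    have h := hhom.smul_mem_hypograph (by norm_num : (0 : ℝ) ≤ 2) hmid
    rwa [smul_add, smul_smul, smul_smul, show (2 : ℝ) * (1 / 2) = 1 by norm_num, one_smul,
      one_smul] at h

end HypographCone

section Pushforward

variable (T : E →L[ℝ] F) {ψ : E → EReal}

/-- The image of the hypograph of `ψ` under `T × id`: the hypograph of the fiberwise supremum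
`y ↦ sup {ψ x | T x = y}`, up to whether that supremum is attained. -/
def mapHypographCone (hhom : PosHomog ψ) (hconc : ConcaveE ψ) : PointedCone ℝ (F × ℝ) :=
  (hypographCone hhom hconc).map (T.prodMap (ContinuousLinearMap.id ℝ ℝ) : E × ℝ →ₗ[ℝ] F × ℝ)

theorem mem_mapHypographCone (hhom : PosHomog ψ) (hconc : ConcaveE ψ) {y : F} {r : ℝ} :
    (y, r) ∈ mapHypographCone T hhom hconc ↔ ∃ x, T x = y ∧ (r : EReal) ≤ ψ x := by
  simp only [mapHypographCone]
  constructor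
  · rintro ⟨⟨x, s⟩, hxs, heq⟩
    obtain ⟨rfl, rfl⟩ := Prod.mk.inj heq
    exact ⟨x, rfl, hxs⟩
  · rintro ⟨x, rfl, hx⟩
    exact ⟨(x, r), hx, rfl⟩

theorem isClosed_mapHypographCone [FiniteDimensional ℝ E] (hhom : PosHomog ψ)
    (hconc : ConcaveE ψ) (husc : UpperSemicontinuous ψ)
    (hker : ∀ x : E, T x = 0 → x ≠ 0 → ψ x < 0) :
    IsClosed (mapHypographCone T hhom hconc : Set (F × ℝ)) := by
  change IsClosed (T.prodMap (ContinuousLinearMap.id ℝ ℝ) '' hypograph ψ)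
  refine isClosed_image_of_cone (isClosed_hypograph husc)
    (fun t ht p hp => hhom.smul_mem_hypograph ht hp) ?_
  rintro ⟨x, r⟩ hp hxr
  obtain ⟨hx, rfl⟩ : T x = 0 ∧ r = 0 := Prod.mk.inj hxr
  have hx0 : x = 0 := by
    by_contra hx0
    exact (hker x hx hx0).not_ge (by simpa [hypograph] using hp)
  rw [hx0, Prod.mk_zero_zero]

theorem zero_one_notMem_mapHypographCone (hhom : PosHomog ψ) (hconc : ConcaveE ψ)
    (hker : ∀ x : E, T x = 0 → x ≠ 0 → ψ x < 0) :
    ((0 : F), (1 : ℝ)) ∉ mapHypographCone T hhom hconc := by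
  intro h
  obtain ⟨x, hx, h1x⟩ := (mem_mapHypographCone T hhom hconc).1 h
  rcases eq_or_ne x 0 with rfl | hx0
  · rw [hhom.map_zero, EReal.coe_nonpos] at h1x
    norm_num at h1x
  · exact (h1x.trans_lt (hker x hx hx0)).not_ge (by simp)

theorem comp_mem_omegaSet_iff (hhom : PosHomog ψ) (hconc : ConcaveE ψ) (φ : F →L[ℝ] ℝ) :
    φ.comp T ∈ OmegaSet ψ ↔ ∀ p ∈ mapHypographCone T hhom hconc, p.2 ≤ φ p.1 := by
  simp only [OmegaSet, Set.mem_ofPred_eq, ContinuousLinearMap.comp_apply]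
  constructor
  · rintro hφ ⟨y, r⟩ hp
    obtain ⟨x, rfl, hx⟩ := (mem_mapHypographCone T hhom hconc).1 hp
    exact EReal.coe_le_coe_iff.1 (hx.trans (hφ x))
  · intro h x
    refine EReal.ge_of_forall_gt_iff_ge.1 fun r hr => EReal.coe_le_coe_iff.2 ?_
    exact h (T x, r) ((mem_mapHypographCone T hhom hconc).2 ⟨x, rfl, hr.le⟩)

end Pushforward

theorem psiDual_preimage_adjoint_general
    [FiniteDimensional ℝ E]
    (T : E →L[ℝ] F) (ψ : E → EReal)
    (hhom : PosHomog ψ) (hconc : ConcaveE ψ) (husc : UpperSemicontinuous ψ)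
    (hker : ∀ x : E, T x = 0 → x ≠ 0 → ψ x < 0) :
    {φ : F →L[ℝ] ℝ | φ.comp T ∈ OmegaSet ψ}.Nonempty ∧
    ∀ y : F, psiDual {φ : F →L[ℝ] ℝ | φ.comp T ∈ OmegaSet ψ} y =
      sSup (ψ '' {x : E | T x = y}) := by
  set C := mapHypographCone T hhom hconc
  have hC : IsClosed (C : Set (F × ℝ)) := isClosed_mapHypographCone T hhom hconc husc hker
  have hdown : ((0 : F), (-1 : ℝ)) ∈ C :=
    (mem_mapHypographCone T hhom hconc).2 ⟨0, map_zero T, by simp [hhom.map_zero]⟩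
  have htop : ((0 : F), (1 : ℝ)) ∉ C := zero_one_notMem_mapHypographCone T hhom hconc hker
  have hΩ (φ : F →L[ℝ] ℝ) := comp_mem_omegaSet_iff T hhom hconc φ
  refine ⟨?_, fun y => le_antisymm ?_ ?_⟩
  · obtain ⟨φ, hφ, -⟩ := exists_le_apply_and_lt_of_notMem hC hdown htop htop
    exact ⟨φ, (hΩ φ).2 hφ⟩
  · refine EReal.le_of_forall_lt_iff_le.1 fun c hc => ?_
    have hyc : (y, c) ∉ C := fun h => by
      obtain ⟨x, hx, hcx⟩ := (mem_mapHypographCone T hhom hconc).1 h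
      exact hc.not_ge (hcx.trans (le_sSup ⟨x, hx, rfl⟩))
    obtain ⟨φ, hφ, hφy⟩ := exists_le_apply_and_lt_of_notMem hC hdown htop hyc
    exact sInf_le_of_le ⟨φ, (hΩ φ).2 hφ, rfl⟩ (EReal.coe_le_coe_iff.2 hφy.le)
  · refine le_sInf ?_
    rintro _ ⟨φ, hφ, rfl⟩
    refine sSup_le ?_
    rintro _ ⟨x, rfl, rfl⟩
    exact hφ x

theorem psiDual_preimage_adjoint
    [FiniteDimensional ℝ E] [FiniteDimensional ℝ F]
    (T : E →L[ℝ] F) (ψ : E → EReal)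
    (hhom : PosHomog ψ) (hconc : ConcaveE ψ) (husc : UpperSemicontinuous ψ)
    (hker : ∀ x : E, T x = 0 → x ≠ 0 → ψ x < 0) :
    {φ : F →L[ℝ] ℝ | φ.comp T ∈ OmegaSet ψ}.Nonempty ∧
    ∀ y : F, psiDual {φ : F →L[ℝ] ℝ | φ.comp T ∈ OmegaSet ψ} y =
      sSup (ψ '' {x : E | T x = y}) :=
  psiDual_preimage_adjoint_general T ψ hhom hconc husc hker

end DirectionalCounting
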